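/- arXiv:2310.20473 — 11 statements merged into one kernel-verified Lean document; each statement's English description precedes it below -/
import Mathlib

section
/- Let V be a type and let d : V → V → ℝ satisfy the directed triangle inequality d(a,c) ≤ d(a,b) + d(b,c) for all a,b,c ∈ V. If vertices u, v, r ∈ V satisfy 2·d(v,r) + d(r,u) ≤ 2·d(v,u) + d(u,r), then d(u,r) + d(r,u) ≤ 2·(d(u,v) + d(v,u)). -/
/-- Key observation (Chechik–Lifshitz): if `2·d(v,r) + d(r,u) ≤ 2·d(v,u) + d(u,r)`,
then the roundtrip distance `d(u⇌r)` is at most `2·d(u⇌v)`. -/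
theorem key_observation {V : Type*} (d : V → V → ℝ)
    (htri : ∀ a b c : V, d a c ≤ d a b + d b c)
    (u v r : V)
    (h : 2 * d v r + d r u ≤ 2 * d v u + d u r) :
    d u r + d r u ≤ 2 * (d u v + d v u) := by
  -- Doubling the triangle inequality through `v` leaves `2 * d v r`, which `h` bounds.
  have hvia_v : d u r ≤ d u v + d v r := htri u v r
  linarith
end

section
/- Let V be a type and let d : V → V → ℝ satisfy the directed triangle inequality d(a,c) ≤ d(a,b) + d(b,c) for all a,b,c ∈ V. Let k be a real number with k ≥ 1. If vertices u, v, r ∈ V satisfy k·d(v,r) + d(r,u) ≤ k·d(v,u) + (k−1)·d(u,r), then d(r,u) + d(u,r) ≤ k·(d(u,v) + d(v,u)). -/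
/-- Generalized key observation (Lemma 5.6): for real `k ≥ 1`, if
`k·d(v,r) + d(r,u) ≤ k·d(v,u) + (k−1)·d(u,r)`, then `d(r⇌u) ≤ k·d(u⇌v)`. -/
theorem generalized_key_observation {V : Type*} (d : V → V → ℝ)
    (htri : ∀ a b c : V, d a c ≤ d a b + d b c)
    (k : ℝ) (hk : 1 ≤ k)
    (u v r : V)
    (h : k * d v r + d r u ≤ k * d v u + (k - 1) * d u r) :
    d r u + d u r ≤ k * (d u v + d v u) := by
  have hdetour : k * d u r ≤ k * (d u v + d v r) :=
    mul_le_mul_of_nonneg_left (htri u v r) (zero_le_one.trans hk)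
  linarith
end

section
/- Let V be a type, d : V → V → ℝ satisfy the directed triangle inequality, and let R be a finite set of vertices of V. Fix v ∈ V and define B²_out(v) = { u ∈ V : for all r ∈ R, 2·d(v,r) + d(r,u) > 2·d(v,u) + d(u,r) }. If u ∉ B²_out(v), then there exists r ∈ R such that d(r,u) + d(u,r) ≤ 2·(d(u,v) + d(v,u)). -/
theorem roundtrip_le_of_pruning_fails {V : Type*} (d : V → V → ℝ) {u v r : V}
    (htri : d u r ≤ d u v + d v r) (hfail : 2 * d v r + d r u ≤ 2 * d v u + d u r) :
    d r u + d u r ≤ 2 * (d u v + d v u) := by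
  linarith

/-- 2-approximation lemma (Lemma 5.2): if `u ∉ B²_out(v)`, then some eliminator
`r ∈ R` has roundtrip distance to `u` at most `2·d(u⇌v)`. -/
theorem two_approximation {V : Type*} (d : V → V → ℝ)
    (htri : ∀ a b c : V, d a c ≤ d a b + d b c)
    (R : Finset V) (v u : V)
    (hu : u ∉ {u : V | ∀ r ∈ R, 2 * d v r + d r u > 2 * d v u + d u r}) :
    ∃ r ∈ R, d r u + d u r ≤ 2 * (d u v + d v u) := by
  simp only [Set.mem_ofPred_eq, not_forall, not_lt] at hu
  obtain ⟨r, hr, hfail⟩ := hu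
  exact ⟨r, hr, roundtrip_le_of_pruning_fails d (htri u v r) hfail⟩
end

section
/- Let V be a type, d : V → V → ℝ satisfy the directed triangle inequality, and let R be a finite set of vertices of V. Fix v ∈ V and define B⁴_out(v) = { u ∈ V : for all r ∈ R, 4·d(v,r) + d(r,u) > 4·d(v,u) + 3·d(u,r) }. If u ∉ B⁴_out(v), then there exists r ∈ R such that d(r,u) + d(u,r) ≤ 4·(d(u,v) + d(v,u)). -/
/-- 4-approximation corollary (Corollary 5.8): if `u ∉ B⁴_out(v)`, then some eliminator
`r ∈ R` has roundtrip distance to `u` at most `4·d(u⇌v)`. -/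
theorem four_approximation {V : Type*} (d : V → V → ℝ)
    (htri : ∀ a b c : V, d a c ≤ d a b + d b c)
    (R : Finset V) (v u : V)
    (hu : u ∉ {u : V | ∀ r ∈ R, 4 * d v r + d r u > 4 * d v u + 3 * d u r}) :
    ∃ r ∈ R, d r u + d u r ≤ 4 * (d u v + d v u) := by
  obtain ⟨r, hr, hprune⟩ : ∃ r ∈ R, 4 * d v r + d r u ≤ 4 * d v u + 3 * d u r := by
    simpa using hu
  exact ⟨r, hr, by linarith [htri u v r]⟩
end

section
/- Let V be a type and let d : V → V → ℝ satisfy the directed triangle inequality d(a,c) ≤ d(a,b) + d(b,c) for all a,b,c ∈ V. For any vertices u, v, r ∈ V, if 4·d(v,r) + d(r,u) > 4·d(v,u) + 3·d(u,r), then 2·d(v,r) + d(r,u) > 2·d(v,u) + d(u,r). Consequently, for any finite eliminator set R ⊆ V, the set B⁴_out(v) = { u : ∀ r ∈ R, 4·d(v,r) + d(r,u) > 4·d(v,u) + 3·d(u,r) } is contained in the set B²_out(v) = { u : ∀ r ∈ R, 2·d(v,r) + d(r,u) > 2·d(v,u) + d(u,r) }. -/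
/-- Subtract twice the triangle inequality through `u` from the hypothesis. -/
lemma two_mul_dist_lt_of_four_mul_dist_lt {V : Type*} {d : V → V → ℝ} {v u r : V}
    (htri : d v r ≤ d v u + d u r) (h : 4 * d v r + d r u > 4 * d v u + 3 * d u r) :
    2 * d v r + d r u > 2 * d v u + d u r := by
  linarith

/-- Lemma 5.10: the pointwise `B⁴_out` condition implies the `B²_out` condition, and
consequently `B⁴_out(v) ⊆ B²_out(v)` for every finite eliminator set `R`. -/
theorem b4_subset_b2 {V : Type*} (d : V → V → ℝ)
    (htri : ∀ a b c : V, d a c ≤ d a b + d b c)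
    (v : V) :
    (∀ u r : V, 4 * d v r + d r u > 4 * d v u + 3 * d u r →
      2 * d v r + d r u > 2 * d v u + d u r) ∧
    (∀ R : Finset V,
      {u : V | ∀ r ∈ R, 4 * d v r + d r u > 4 * d v u + 3 * d u r} ⊆
        {u : V | ∀ r ∈ R, 2 * d v r + d r u > 2 * d v u + d u r}) :=
  have pointwise u r := two_mul_dist_lt_of_four_mul_dist_lt (htri v u r)
  ⟨pointwise, fun _ u hu r hr => pointwise u r (hu r hr)⟩
end

section
/- Let V be a type, d : V → V → ℝ satisfy the directed triangle inequality, and R be a finite set of vertices. Fix v ∈ V and suppose u ∈ V satisfies, for all r ∈ R, the inequality 2·d(v,r) + d(r,u) > 2·d(v,u) + d(u,r) (i.e., u ∈ B²_out(v)). Then every vertex x on a shortest path from v to u also lies in B²_out(v); formally, if x ∈ V satisfies d(v,u) = d(v,x) + d(x,u), then for all r ∈ R, 2·d(v,r) + d(r,x) > 2·d(v,x) + d(x,r). -/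
theorem two_mul_add_lt_of_dist_eq_add {V : Type*} {d : V → V → ℝ}
    (htri : ∀ a b c : V, d a c ≤ d a b + d b c) {v u x r : V}
    (hx : d v u = d v x + d x u) (hu : 2 * d v u + d u r < 2 * d v r + d r u) :
    2 * d v x + d x r < 2 * d v r + d r x :=
  calc 2 * d v x + d x r
      ≤ 2 * d v x + d x u + d u r := by linarith [htri x u r]
    _ = 2 * d v u - d x u + d u r := by rw [hx]; ring
    _ < 2 * d v r + d r u - d x u := by linarith
    _ ≤ 2 * d v r + d r x := by linarith [htri r x u]

/-- Closedness of `B²_out(v)` (Claim 5.4): if `u ∈ B²_out(v)` and `x` lies on a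
shortest path from `v` to `u`, then `x ∈ B²_out(v)`. -/
theorem b2_closed_under_shortest_path {V : Type*} (d : V → V → ℝ)
    (htri : ∀ a b c : V, d a c ≤ d a b + d b c)
    (R : Finset V) (v u : V)
    (hu : ∀ r ∈ R, 2 * d v r + d r u > 2 * d v u + d u r)
    (x : V) (hx : d v u = d v x + d x u) :
    ∀ r ∈ R, 2 * d v r + d r x > 2 * d v x + d x r :=
  fun r hr => two_mul_add_lt_of_dist_eq_add htri hx (hu r hr)
end

section
/- Let V be a type and let d : V → V → ℝ satisfy the directed triangle inequality d(a,c) ≤ d(a,b) + d(b,c) for all a,b,c ∈ V. Suppose vertices r₂, v, u, r₁ ∈ V satisfy: (i) 2·d(r₂,u) + d(u,r₁) ≥ 2·d(r₂,r₁) + d(r₁,u), and (ii) 4·d(r₂,r₁) + d(r₁,v) > 4·d(r₂,v) + 3·d(v,r₁). Then d(v,r₁) + d(r₁,v) < 4·(d(v,u) + d(u,v)). -/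
/-- 4-Approximation Filtering Lemma (Lemma 5.9): if
(i) `2·d(r₂,u) + d(u,r₁) ≥ 2·d(r₂,r₁) + d(r₁,u)` and
(ii) `4·d(r₂,r₁) + d(r₁,v) > 4·d(r₂,v) + 3·d(v,r₁)`,
then `d(v⇌r₁) < 4·d(v⇌u)`. -/
theorem four_approx_filtering {V : Type*} (d : V → V → ℝ)
    (htri : ∀ a b c : V, d a c ≤ d a b + d b c)
    (r₂ v u r₁ : V)
    (h1 : 2 * d r₂ u + d u r₁ ≥ 2 * d r₂ r₁ + d r₁ u)
    (h2 : 4 * d r₂ r₁ + d r₁ v > 4 * d r₂ v + 3 * d v r₁) :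
    d v r₁ + d r₁ v < 4 * (d v u + d u v) := by
  -- `2·(i) + (ii)` cancels `d r₂ r₁`; the triangle inequality through `v` then eliminates `r₂`.
  have without_r₂ : 2 * d r₁ u + 3 * d v r₁ < 4 * d v u + 2 * d u r₁ + d r₁ v := by
    linarith [htri r₂ v u]
  have hu_r₁ : d u r₁ ≤ d u v + d v r₁ := htri u v r₁
  have hr₁_v : d r₁ v ≤ d r₁ u + d u v := htri r₁ u v
  linarith
end

section
/- Let V be a type and let d : V → V → ℝ satisfy the directed triangle inequality d(a,c) ≤ d(a,b) + d(b,c) for all a,b,c ∈ V. Let u, v, x, y, s ∈ V and let w ∈ ℝ be the weight of an edge (x,y) lying on a shortest path from u to v, i.e., d(u,v) = d(u,x) + w + d(y,v). If 2·d(x,s) + d(s,y) ≤ 2·w + d(y,s), then d(u,s) + d(s,v) ≤ 2·d(u,v) + d(v,u). -/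
/-! The elimination condition bounds the detour `x → s → y` by `2 w + d(y,x)`, and `d(y,x)` is at
most the length of the way back `y → v → u → x`. Splicing the detour into the shortest `u → v` path
in place of the edge `(x,y)` then costs at most one extra copy of that path and one of `d(v,u)`. -/

theorem detour_le_of_eliminator {V : Type*} (d : V → V → ℝ)
    (htri : ∀ a b c : V, d a c ≤ d a b + d b c) {x y s : V} {w : ℝ}
    (helim : 2 * d x s + d s y ≤ 2 * w + d y s) :
    d x s + d s y ≤ 2 * w + d y x := by
  linarith [htri y x s]

/-- Core inequality in the stretch analysis of the 3-roundtrip spanner (Lemma 4.1):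
if the edge `(x,y)` of weight `w` lies on a shortest `u → v` path and is removed
because of eliminator `s`, then `d(u,s) + d(s,v) ≤ 2·d(u,v) + d(v,u)`. -/
theorem three_spanner_stretch {V : Type*} (d : V → V → ℝ)
    (htri : ∀ a b c : V, d a c ≤ d a b + d b c)
    (u v x y s : V) (w : ℝ)
    (hpath : d u v = d u x + w + d y v)
    (helim : 2 * d x s + d s y ≤ 2 * w + d y s) :
    d u s + d s v ≤ 2 * d u v + d v u := by
  have hdetour := detour_le_of_eliminator d htri helim
  have hback : d y x ≤ d y v + d v u + d u x := by
    linarith [htri y v x, htri v u x]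
  calc d u s + d s v ≤ d u x + (d x s + d s y) + d y v := by
        linarith [htri u x s, htri s y v]
    _ ≤ d u x + (2 * w + (d y v + d v u + d u x)) + d y v := by linarith
    _ = 2 * d u v + d v u := by rw [hpath]; ring
end

section
/- Let V be a type and let d : V → V → ℝ satisfy the directed triangle inequality d(a,c) ≤ d(a,b) + d(b,c) for all a,b,c ∈ V. Let u, v, x, y, s ∈ V and w ∈ ℝ satisfy d(u,v) = d(u,x) + w + d(y,v) (the edge (x,y) of weight w lies on a shortest path from u to v) and 2·d(x,s) + d(s,y) ≤ 2·w + d(y,s). Set g := d(u,v) + d(v,u). Then d(u,s) + d(s,v) + d(v,u) ≤ 2·g; in particular both d(u,s) + d(s,u) ≤ 2·g and d(v,s) + d(s,v) ≤ 2·g. -/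
/-!
Route `u → x → s → y → v`: it costs `d(u,v) - w` plus the detour `d(x,s) + d(s,y)`. The
elimination rule, together with `d(y,s) ≤ d(y,v) + d(v,u) + d(u,x) + d(x,s)` (go around the
cycle back to `x`), bounds that detour by `w + g`, so the cycle `u → s → v → u` has length at
most `2g`. Each roundtrip through `s` is then at most this cycle.
-/

lemma add_le_via_pair {V : Type*} {d : V → V → ℝ}
    (htri : ∀ a b c : V, d a c ≤ d a b + d b c) (a b x y s : V) :
    d a s + d s b ≤ d a x + (d x s + d s y) + d y b := by
  linarith [htri a x s, htri s y b]

lemma detour_le_of_elim {V : Type*} {d : V → V → ℝ}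
    (htri : ∀ a b c : V, d a c ≤ d a b + d b c) {u v x y s : V} {w : ℝ}
    (hpath : d u v = d u x + w + d y v)
    (helim : 2 * d x s + d s y ≤ 2 * w + d y s) :
    d x s + d s y ≤ w + (d u v + d v u) := by
  have hys : d y s ≤ d y v + d v u + (d u x + d x s) :=
    calc d y s ≤ d y v + d v s := htri y v s
      _ ≤ d y v + (d v u + d u s) := by linarith [htri v u s]
      _ ≤ d y v + d v u + (d u x + d x s) := by linarith [htri u x s]
  linarith

/-- Edge-delete-stretch lemma (Lemma 6.5): if the edge `(x,y)` of weight `w` lying on a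
shortest `u → v` path is deleted because of eliminator `s`, then with
`g := d(u,v) + d(v,u)` we have `d(u,s) + d(s,v) + d(v,u) ≤ 2·g`, and in particular
both `d(u⇌s) ≤ 2·g` and `d(v⇌s) ≤ 2·g`. -/
theorem edge_delete_stretch {V : Type*} (d : V → V → ℝ)
    (htri : ∀ a b c : V, d a c ≤ d a b + d b c)
    (u v x y s : V) (w : ℝ)
    (hpath : d u v = d u x + w + d y v)
    (helim : 2 * d x s + d s y ≤ 2 * w + d y s)
    (g : ℝ) (hg : g = d u v + d v u) :
    d u s + d s v + d v u ≤ 2 * g ∧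
      d u s + d s u ≤ 2 * g ∧ d v s + d s v ≤ 2 * g := by
  have hcycle : d u s + d s v + d v u ≤ 2 * g := by
    linarith [add_le_via_pair htri u v x y s, detour_le_of_elim htri hpath helim]
  exact ⟨hcycle, by linarith [htri s v u], by linarith [htri v u s]⟩
end

section
/- Let V be a type, d : V → V → ℝ satisfy the directed triangle inequality, and R be a finite set of vertices. Suppose vertices u, v, r ∈ V satisfy 2·d(r,v) + d(u,r) ≤ 2·d(u,v) + d(r,u), and suppose there exists r₁ ∈ R with 2·d(r,r₁) + d(r₁,u) ≤ 2·d(r,u) + d(u,r₁) (i.e., u ∉ B²_out(r) with eliminator set R). Then there exists r₁ ∈ R such that d(r₁,u) + d(u,r₁) ≤ 4·(d(u,v) + d(v,u)). -/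
/-!
Both hypotheses are instances of one inequality: if `2·d(a,b) + d(b,c) ≤ 2·d(a,c) + d(c,b)`, then
one triangle inequality `d(c,b) ≤ d(c,a) + d(a,b)` gives `d(b⇌c) ≤ 2·d(a⇌c)`. Applied to `d` with
`(a,b,c) = (r,r₁,u)` it gives `d(r₁⇌u) ≤ 2·d(r⇌u)`; applied to the reversed distance with
`(a,b,c) = (v,r,u)` it gives `d(r⇌u) ≤ 2·d(u⇌v)`. The two factors of 2 compose to 4.
-/

section Roundtrip

variable {V : Type*}

def roundtrip (d : V → V → ℝ) (x y : V) : ℝ := d x y + d y x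

theorem roundtrip_comm (d : V → V → ℝ) (x y : V) : roundtrip d x y = roundtrip d y x :=
  add_comm _ _

theorem roundtrip_flip (d : V → V → ℝ) (x y : V) : roundtrip (flip d) x y = roundtrip d x y :=
  add_comm _ _

theorem roundtrip_le_two_mul_roundtrip_of_two_mul_add_le {d : V → V → ℝ}
    (htri : ∀ a b c : V, d a c ≤ d a b + d b c) {a b c : V}
    (h : 2 * d a b + d b c ≤ 2 * d a c + d c b) :
    roundtrip d b c ≤ 2 * roundtrip d a c := by
  unfold roundtrip
  linarith [htri c a b]

end Roundtrip

/-- Two-layer lemma (as in the proof of Lemma 5.3): if `2·d(r,v) + d(u,r) ≤ 2·d(u,v) + d(r,u)`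
and `u ∉ B²_out(r)` (witnessed by some `r₁ ∈ R`), then some `r₁ ∈ R` has
`d(r₁⇌u) ≤ 4·d(u⇌v)`. -/
theorem two_layer_four_approx {V : Type*} (d : V → V → ℝ)
    (htri : ∀ a b c : V, d a c ≤ d a b + d b c)
    (R : Finset V) (u v r : V)
    (h1 : 2 * d r v + d u r ≤ 2 * d u v + d r u)
    (h2 : ∃ r₁ ∈ R, 2 * d r r₁ + d r₁ u ≤ 2 * d r u + d u r₁) :
    ∃ r₁ ∈ R, d r₁ u + d u r₁ ≤ 4 * (d u v + d v u) := by
  obtain ⟨r₁, hr₁, hr₁u⟩ := h2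
  have htri_flip : ∀ a b c : V, flip d a c ≤ flip d a b + flip d b c :=
    fun a b c => (htri c b a).trans_eq (add_comm _ _)
  have hru : roundtrip d r u ≤ 2 * roundtrip d u v := by
    simpa only [roundtrip_flip, roundtrip_comm d v u] using
      roundtrip_le_two_mul_roundtrip_of_two_mul_add_le htri_flip (a := v) (b := r) (c := u) h1
  have hr₁ru : roundtrip d r₁ u ≤ 2 * roundtrip d r u :=
    roundtrip_le_two_mul_roundtrip_of_two_mul_add_le htri hr₁u
  exact ⟨r₁, hr₁, by unfold roundtrip at hru hr₁ru; linarith⟩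
end

section
/- Let N be a finite nonempty set with D := |N|, let p be a real number with 0 ≤ p ≤ 1, and let e : N → ℕ satisfy 1 ≤ e(v) ≤ D for every v ∈ N and Σ_{v ∈ N} e(v) = D·(D+1)/2. Then Σ_{v ∈ N} (1−p)^{e(v)} ≤ (D/2)·( (1−p) + (1−p)^D ). -/
private lemma tele_aux (q : ℝ) (a b : ℕ) (hab : a ≤ b) :
    (1 - q) * ∑ i ∈ Finset.Ico a b, q ^ i = q ^ a - q ^ b := by
  rw [Finset.sum_Ico_eq_sum_range]
  simp_rw [pow_add, ← Finset.mul_sum]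
  have hg := geom_sum_mul q (b - a)
  have hb : q ^ b = q ^ a * q ^ (b - a) := by
    rw [← pow_add, Nat.add_sub_cancel' hab]
  calc (1 - q) * (q ^ a * ∑ i ∈ Finset.range (b - a), q ^ i)
      = -q ^ a * ((∑ i ∈ Finset.range (b - a), q ^ i) * (q - 1)) := by ring
    _ = -q ^ a * (q ^ (b - a) - 1) := by rw [hg]
    _ = q ^ a - q ^ b := by rw [hb]; ring

private lemma chord_key (q : ℝ) (hq0 : 0 ≤ q) (hq1 : q ≤ 1) (k D : ℕ)
    (hk : 1 ≤ k) (hkD : k ≤ D) :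
    ((D : ℝ) - 1) * q ^ k ≤ ((D : ℝ) - k) * q + ((k : ℝ) - 1) * q ^ D := by
  have h1q : (0 : ℝ) ≤ 1 - q := by linarith
  have hc : (0 : ℝ) ≤ (k : ℝ) - 1 := by
    have : (1 : ℝ) ≤ (k : ℝ) := by exact_mod_cast hk
    linarith
  have hd : (0 : ℝ) ≤ (D : ℝ) - k := by
    have : (k : ℝ) ≤ (D : ℝ) := by exact_mod_cast hkD
    linarith
  -- A : (k-1)*(1-q)*q^(k-1) ≤ q - q^k
  have hA : ((k : ℝ) - 1) * ((1 - q) * q ^ (k - 1)) ≤ q - q ^ k := by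
    have htele := tele_aux q 1 k hk
    have hbound : ((Finset.Ico 1 k).card : ℝ) * q ^ (k - 1) ≤
        ∑ i ∈ Finset.Ico 1 k, q ^ i := by
      rw [← nsmul_eq_mul]
      apply Finset.card_nsmul_le_sum
      intro i hi
      rw [Finset.mem_Ico] at hi
      exact pow_le_pow_of_le_one hq0 hq1 (Nat.le_sub_one_of_lt hi.2)
    rw [Nat.card_Ico] at hbound
    have hcast : ((k - 1 : ℕ) : ℝ) = (k : ℝ) - 1 := by
      rw [Nat.cast_sub hk]; norm_num
    rw [hcast] at hbound
    have := mul_le_mul_of_nonneg_left hbound h1q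
    rw [htele, pow_one] at this
    calc ((k : ℝ) - 1) * ((1 - q) * q ^ (k - 1))
        = (1 - q) * (((k : ℝ) - 1) * q ^ (k - 1)) := by ring
      _ ≤ q - q ^ k := this
  -- B : q^k - q^D ≤ (D-k)*(1-q)*q^k
  have hB : q ^ k - q ^ D ≤ ((D : ℝ) - k) * ((1 - q) * q ^ k) := by
    have htele := tele_aux q k D hkD
    have hbound : (∑ i ∈ Finset.Ico k D, q ^ i) ≤
        ((Finset.Ico k D).card : ℝ) * q ^ k := by
      rw [← nsmul_eq_mul]
      apply Finset.sum_le_card_nsmul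
      intro i hi
      rw [Finset.mem_Ico] at hi
      exact pow_le_pow_of_le_one hq0 hq1 hi.1
    rw [Nat.card_Ico] at hbound
    have hcast : ((D - k : ℕ) : ℝ) = (D : ℝ) - k := by
      rw [Nat.cast_sub hkD]
    rw [hcast] at hbound
    have := mul_le_mul_of_nonneg_left hbound h1q
    rw [htele] at this
    calc q ^ k - q ^ D ≤ (1 - q) * (((D : ℝ) - k) * q ^ k) := this
      _ = ((D : ℝ) - k) * ((1 - q) * q ^ k) := by ring
  have hqq : q ^ k ≤ q ^ (k - 1) :=
    pow_le_pow_of_le_one hq0 hq1 (Nat.sub_le k 1)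
  -- chain: (k-1)(q^k - q^D) ≤ (k-1)(D-k)(1-q)q^k ≤ (k-1)(D-k)(1-q)q^(k-1) ≤ (D-k)(q - q^k)
  have h1 := mul_le_mul_of_nonneg_left hB hc
  have h3 := mul_le_mul_of_nonneg_left hA hd
  have h2 : ((k : ℝ) - 1) * (((D : ℝ) - k) * ((1 - q) * q ^ k)) ≤
      ((D : ℝ) - k) * (((k : ℝ) - 1) * ((1 - q) * q ^ (k - 1))) := by
    have := mul_le_mul_of_nonneg_left hqq
      (mul_nonneg (mul_nonneg hc hd) h1q)
    nlinarith [this]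
  nlinarith [h1, h2, h3]

/-- Convexity step in the proof of Lemma 4.2: if every `e(v) ∈ [1, D]` and the `e(v)`
sum to `D·(D+1)/2`, then `Σ (1−p)^{e(v)} ≤ (D/2)·((1−p) + (1−p)^D)`. -/
theorem convexity_step {V : Type*} (N : Finset V) (hN : N.Nonempty)
    (D : ℕ) (hD : D = N.card)
    (p : ℝ) (hp0 : 0 ≤ p) (hp1 : p ≤ 1)
    (e : V → ℕ)
    (he : ∀ v ∈ N, 1 ≤ e v ∧ e v ≤ D)
    (hsum : (∑ v ∈ N, (e v : ℝ)) = D * (D + 1) / 2) :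
    (∑ v ∈ N, (1 - p) ^ (e v)) ≤ (D / 2 : ℝ) * ((1 - p) + (1 - p) ^ D) := by
  set q : ℝ := 1 - p with hq
  have hq0 : 0 ≤ q := by simp [hq]; linarith
  have hq1 : q ≤ 1 := by simp [hq]; linarith
  have hD1 : 1 ≤ D := by
    rw [hD]
    exact Finset.card_pos.mpr hN
  rcases eq_or_lt_of_le hD1 with hD1' | hD2
  · -- D = 1
    obtain ⟨v, hv⟩ := Finset.card_eq_one.mp (hD ▸ hD1'.symm)
    subst hv
    have hev := he v (Finset.mem_singleton_self v)
    have : e v = 1 := le_antisymm (hD1' ▸ hev.2) hev.1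
    simp [this, ← hD1']
    linarith
  · -- D ≥ 2
    have hkey : ∀ v ∈ N, ((D : ℝ) - 1) * q ^ (e v) ≤
        ((D : ℝ) - e v) * q + ((e v : ℝ) - 1) * q ^ D := fun v hv =>
      chord_key q hq0 hq1 (e v) D (he v hv).1 (he v hv).2
    have hsum' := Finset.sum_le_sum hkey
    rw [← Finset.mul_sum] at hsum'
    have hrhs : (∑ v ∈ N, (((D : ℝ) - e v) * q + ((e v : ℝ) - 1) * q ^ D))
        = ((D : ℝ) * D - D * (D + 1) / 2) * q + (D * (D + 1) / 2 - D) * q ^ D := by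
      rw [Finset.sum_add_distrib, ← Finset.sum_mul, ← Finset.sum_mul,
        Finset.sum_sub_distrib, Finset.sum_sub_distrib, hsum,
        Finset.sum_const, Finset.sum_const, ← hD]
      ring
    rw [hrhs] at hsum'
    have hDpos : (0 : ℝ) < (D : ℝ) - 1 := by
      have : (2 : ℝ) ≤ (D : ℝ) := by exact_mod_cast hD2
      linarith
    rw [← mul_le_mul_iff_right₀ hDpos]
    calc ((D : ℝ) - 1) * ∑ v ∈ N, q ^ (e v)
        ≤ ((D : ℝ) * D - D * (D + 1) / 2) * q + (D * (D + 1) / 2 - D) * q ^ D :=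
          hsum'
      _ = ((D : ℝ) - 1) * ((D / 2 : ℝ) * (q + q ^ D)) := by ring
end
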